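/- arXiv:2312.11110 — 4 statements merged into one kernel-verified Lean document; each statement's English description precedes it below -/
import Mathlib

section
/- Let 0 ≤ d < 1 and 0 ≤ i < 1 be real numbers. There exist constants 0 < c ≤ C such that for every integer n ≥ 2, c · n² ≤ W(n;i,d) ≤ C · n², where W(n;i,d) := n · ∑_{q=1}^{n−1} (q^{−i} / H_{n−1}(i)) · M₁(q,d). (This is the Metcalfe case of the paper's traffic-load theorem: the expected total number of destinations W(i,d) satisfies W = Θ(n²) when 0 ≤ d < 1 and 0 ≤ i < 1, reproducing Metcalfe's Law V ∝ n².) -/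
/-!
For `p = 1 - α`, telescoping the tangent-line inequality `p (x+1)^{p-1} ≤ (x+1)^p - x^p` of the
concave power `x ^ p` (when `0 ≤ α < 1`), or its reverse for the convex power (when `α ≤ 0`), gives
`H m α ≤ m^{1-α}/(1-α)`, resp. `H m α ≥ m^{1-α}/(1-α)`. Since `M₁(q,d) = H q (d-1) / H q d`, this
pins `M₁(q,d)` between `(1-d)/(2-d) · q` and `q`, and the same estimate for `i` shows that the
`Zipf(i)`-mean of `q` on `{1,…,n-1}` is at least `(1-i)/(2-i) · (n-1)`. Hence `W(n;i,d)` lies between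
a constant multiple of `n (n-1)` and `n²`.
-/

/-- `H m α = ∑_{j=1}^m j^{-α}` (generalized harmonic number). -/
noncomputable def H (m : ℕ) (α : ℝ) : ℝ := ∑ j ∈ Finset.Icc 1 m, (j : ℝ) ^ (-α)

/-- Mean of the truncated Zipf distribution with exponent `d` on `{1,…,q}`. -/
noncomputable def M1 (q : ℕ) (d : ℝ) : ℝ :=
  (∑ r ∈ Finset.Icc 1 q, (r : ℝ) ^ (1 - d)) / (∑ r ∈ Finset.Icc 1 q, (r : ℝ) ^ (-d))

/-- Expected total number of data destinations over all `n` sessions. -/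
noncomputable def W (n : ℕ) (i d : ℝ) : ℝ :=
  n * ∑ q ∈ Finset.Icc 1 (n - 1), ((q : ℝ) ^ (-i) / H (n - 1) i) * M1 q d

open Finset Real

lemma le_rpow_add_one_sub_rpow {p x : ℝ} (hp₀ : 0 ≤ p) (hp₁ : p ≤ 1) (hx : 0 ≤ x) :
    p * (x + 1) ^ (p - 1) ≤ (x + 1) ^ p - x ^ p := by
  have hderiv : HasDerivAt (fun y : ℝ => y ^ p) (p * (x + 1) ^ (p - 1)) (x + 1) :=
    hasDerivAt_rpow_const (Or.inl (by positivity))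
  simpa [slope_def_field] using (concaveOn_rpow hp₀ hp₁).le_slope_of_hasDerivAt
    (Set.mem_Ici.2 hx) (Set.mem_Ici.2 (by positivity)) (lt_add_one x) hderiv

lemma rpow_add_one_sub_rpow_le {p x : ℝ} (hp : 1 ≤ p) (hx : 0 ≤ x) :
    (x + 1) ^ p - x ^ p ≤ p * (x + 1) ^ (p - 1) := by
  simpa [slope_def_field] using (convexOn_rpow hp).slope_le_of_hasDerivAt
    (Set.mem_Ici.2 hx) (Set.mem_Ici.2 (by positivity)) (lt_add_one x)
    (hasDerivAt_rpow_const (Or.inr hp))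

lemma H_zero (α : ℝ) : H 0 α = 0 := by simp [H]

lemma H_succ (m : ℕ) (α : ℝ) : H (m + 1) α = H m α + ((m : ℝ) + 1) ^ (-α) := by
  rw [H, sum_Icc_succ_top (by omega), Nat.cast_succ, H]

lemma H_pos {m : ℕ} (hm : 1 ≤ m) (α : ℝ) : 0 < H m α :=
  sum_pos (fun j hj => rpow_pos_of_pos (by have := (mem_Icc.1 hj).1; positivity) _)
    ⟨1, mem_Icc.2 ⟨le_rfl, hm⟩⟩

lemma H_nonneg (m : ℕ) (α : ℝ) : 0 ≤ H m α :=
  sum_nonneg fun j _ => rpow_nonneg j.cast_nonneg _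

lemma H_le_rpow_div {α : ℝ} (hα₀ : 0 ≤ α) (hα₁ : α < 1) (m : ℕ) :
    H m α ≤ (m : ℝ) ^ (1 - α) / (1 - α) := by
  have hp : 0 < 1 - α := by linarith
  induction m with
  | zero => simp [H_zero, zero_rpow hp.ne']
  | succ m ih =>
    have hstep := le_rpow_add_one_sub_rpow hp.le (by linarith) m.cast_nonneg
    rw [sub_sub_cancel_left] at hstep
    rw [H_succ, Nat.cast_succ, le_div_iff₀ hp]
    rw [le_div_iff₀ hp] at ih
    linarith

lemma rpow_div_le_H {α : ℝ} (hα : α ≤ 0) (m : ℕ) :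
    (m : ℝ) ^ (1 - α) / (1 - α) ≤ H m α := by
  have hp : 0 < 1 - α := by linarith
  induction m with
  | zero => simp [H_zero, zero_rpow hp.ne']
  | succ m ih =>
    have hstep := rpow_add_one_sub_rpow_le (p := 1 - α) (by linarith) m.cast_nonneg
    rw [sub_sub_cancel_left] at hstep
    rw [H_succ, Nat.cast_succ, div_le_iff₀ hp]
    rw [div_le_iff₀ hp] at ih
    linarith

lemma H_sub_one (m : ℕ) (α : ℝ) : H m (α - 1) = ∑ j ∈ Icc 1 m, (j : ℝ) ^ (-α) * j := by
  refine sum_congr rfl fun j hj => ?_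
  have hj : (j : ℝ) ≠ 0 := by have := (mem_Icc.1 hj).1; positivity
  rw [neg_sub, sub_eq_neg_add, rpow_add_one hj]

lemma sum_rpow_div_H {m : ℕ} (hm : 1 ≤ m) (α : ℝ) :
    ∑ j ∈ Icc 1 m, (j : ℝ) ^ (-α) / H m α = 1 := by
  rw [← sum_div]
  exact div_self (H_pos hm α).ne'

lemma mul_le_H_sub_one_div_H {α : ℝ} (hα₀ : 0 ≤ α) (hα₁ : α < 1) {m : ℕ} (hm : 1 ≤ m) :
    (1 - α) / (2 - α) * m ≤ H m (α - 1) / H m α := by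
  have hlower := rpow_div_le_H (α := α - 1) (by linarith) m
  rw [show 1 - (α - 1) = 2 - α by ring] at hlower
  have hm₀ : (m : ℝ) ≠ 0 := by positivity
  have hpow : (m : ℝ) ^ (2 - α) = (m : ℝ) ^ (1 - α) * m := by
    rw [show 2 - α = (1 - α) + 1 by ring, rpow_add_one hm₀]
  have h₁ : 0 < 1 - α := by linarith
  rw [le_div_iff₀ (H_pos hm α)]
  calc (1 - α) / (2 - α) * m * H m α
      ≤ (1 - α) / (2 - α) * m * ((m : ℝ) ^ (1 - α) / (1 - α)) := by
        have hκ : 0 ≤ (1 - α) / (2 - α) := div_nonneg h₁.le (by linarith)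
        exact mul_le_mul_of_nonneg_left (H_le_rpow_div hα₀ hα₁ m) (mul_nonneg hκ m.cast_nonneg)
    _ = (m : ℝ) ^ (2 - α) / (2 - α) := by rw [hpow]; field_simp
    _ ≤ H m (α - 1) := hlower

lemma M1_eq_H_div_H (q : ℕ) (d : ℝ) : M1 q d = H q (d - 1) / H q d := by
  simp only [M1, H, neg_sub]

lemma M1_le (q : ℕ) (d : ℝ) : M1 q d ≤ q := by
  rcases Nat.eq_zero_or_pos q with rfl | hq
  · simp [M1]
  rw [M1_eq_H_div_H, div_le_iff₀ (H_pos hq d), H_sub_one, mul_comm, H, sum_mul]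
  gcongr with j hj
  exact_mod_cast (mem_Icc.1 hj).2

lemma W_le_sq {n : ℕ} (hn : 2 ≤ n) (i d : ℝ) : W n i d ≤ (n : ℝ) ^ 2 :=
  calc W n i d ≤ n * ∑ q ∈ Icc 1 (n - 1), ((q : ℝ) ^ (-i) / H (n - 1) i) * n := by
        rw [W]
        gcongr with q hq
        · exact div_nonneg (by positivity) (H_nonneg _ _)
        · exact (M1_le q d).trans (by exact_mod_cast (mem_Icc.1 hq).2.trans (n.sub_le 1))
    _ = (n : ℝ) ^ 2 := by rw [← sum_mul, sum_rpow_div_H (by omega)]; ring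

lemma mul_sq_le_W {i d : ℝ} (hd₀ : 0 ≤ d) (hd₁ : d < 1) (hi₀ : 0 ≤ i) (hi₁ : i < 1)
    {n : ℕ} (hn : 2 ≤ n) :
    (1 - d) / (2 - d) * ((1 - i) / (2 - i)) / 2 * (n : ℝ) ^ 2 ≤ W n i d := by
  have hκ : 0 < (1 - d) / (2 - d) := div_pos (by linarith) (by linarith)
  have hν : 0 < (1 - i) / (2 - i) := div_pos (by linarith) (by linarith)
  have hm : ((n - 1 : ℕ) : ℝ) = n - 1 := by rw [Nat.cast_sub (by omega), Nat.cast_one]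
  have hn' : (2 : ℝ) ≤ n := by exact_mod_cast hn
  calc (1 - d) / (2 - d) * ((1 - i) / (2 - i)) / 2 * (n : ℝ) ^ 2
      ≤ n * ((1 - d) / (2 - d) * ((1 - i) / (2 - i) * (n - 1 : ℕ))) := by
        have hhalf : 0 ≤ (1 - d) / (2 - d) * ((1 - i) / (2 - i)) * n * (n - 2) :=
          mul_nonneg (by positivity) (by linarith)
        rw [hm]
        nlinarith [hhalf]
    _ ≤ n * ((1 - d) / (2 - d) * (H (n - 1) (i - 1) / H (n - 1) i)) := by
        gcongr
        exact mul_le_H_sub_one_div_H hi₀ hi₁ (by omega)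
    _ = n * ∑ q ∈ Icc 1 (n - 1), ((q : ℝ) ^ (-i) / H (n - 1) i) * ((1 - d) / (2 - d) * q) := by
        rw [H_sub_one, sum_div, mul_sum]
        congr 1
        refine sum_congr rfl fun q _ => ?_
        ring
    _ ≤ W n i d := by
        rw [W]
        gcongr with q hq
        · exact div_nonneg (by positivity) (H_nonneg _ _)
        rw [M1_eq_H_div_H]
        exact mul_le_H_sub_one_div_H hd₀ hd₁ (mem_Icc.1 hq).1

/-- Metcalfe case: `W(n;i,d) = Θ(n²)` for `0 ≤ d < 1` and `0 ≤ i < 1`. -/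
theorem W_metcalfe (d i : ℝ) (hd0 : 0 ≤ d) (hd1 : d < 1) (hi0 : 0 ≤ i) (hi1 : i < 1) :
    ∃ c C : ℝ, 0 < c ∧ c ≤ C ∧
      ∀ n : ℕ, 2 ≤ n →
        c * (n : ℝ) ^ 2 ≤ W n i d ∧ W n i d ≤ C * (n : ℝ) ^ 2 := by
  have hκ : (1 - d) / (2 - d) ∈ Set.Ioc 0 1 :=
    ⟨div_pos (by linarith) (by linarith), (div_le_one (by linarith)).2 (by linarith)⟩
  have hν : (1 - i) / (2 - i) ∈ Set.Ioc 0 1 :=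
    ⟨div_pos (by linarith) (by linarith), (div_le_one (by linarith)).2 (by linarith)⟩
  refine ⟨(1 - d) / (2 - d) * ((1 - i) / (2 - i)) / 2, 1, half_pos (mul_pos hκ.1 hν.1), ?_,
    fun n hn => ⟨mul_sq_le_W hd0 hd1 hi0 hi1 hn, (one_mul ((n : ℝ) ^ 2)).symm ▸ W_le_sq hn i d⟩⟩
  linarith [mul_le_one₀ hκ.2 hν.1.le hν.2]
end

section
/- Let d > 2 and i ≥ 0 be real numbers. There exist constants 0 < c ≤ C such that for every integer n ≥ 2, c · n ≤ W(n;i,d) ≤ C · n, where W(n;i,d) := n · ∑_{q=1}^{n−1} (q^{−i} / H_{n−1}(i)) · M₁(q,d). (This is the Sarnoff case of the paper's traffic-load theorem: W(i,d) = Θ(n) for d > 2 and any i ≥ 0, reproducing Sarnoff's Law V ∝ n.) -/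
lemma summable_aux (d : ℝ) (hd : 2 < d) : Summable (fun n : ℕ => (n : ℝ) ^ (1 - d)) := by
  rw [Real.summable_nat_rpow]; linarith

lemma den_ge_one (q : ℕ) (hq : 1 ≤ q) (d : ℝ) :
    1 ≤ ∑ r ∈ Finset.Icc 1 q, (r : ℝ) ^ (-d) := by
  have h1 : (1 : ℕ) ∈ Finset.Icc 1 q := by simp [hq]
  have := Finset.single_le_sum (f := fun r : ℕ => (r : ℝ) ^ (-d))
    (fun r _ => Real.rpow_nonneg (Nat.cast_nonneg r) _) h1
  simpa using this

lemma M1_ge_one (q : ℕ) (hq : 1 ≤ q) (d : ℝ) : 1 ≤ M1 q d := by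
  have hden := den_ge_one q hq d
  have hmono : ∑ r ∈ Finset.Icc 1 q, (r : ℝ) ^ (-d)
      ≤ ∑ r ∈ Finset.Icc 1 q, (r : ℝ) ^ (1 - d) := by
    apply Finset.sum_le_sum
    intro r hr
    have hr1 : (1 : ℝ) ≤ (r : ℝ) := by
      have := (Finset.mem_Icc.mp hr).1
      exact_mod_cast this
    exact Real.rpow_le_rpow_of_exponent_le hr1 (by linarith)
  rw [M1, le_div_iff₀ (by linarith), one_mul]
  linarith

lemma M1_le_s17 (q : ℕ) (hq : 1 ≤ q) (d : ℝ) (hd : 2 < d) :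
    M1 q d ≤ ∑' n : ℕ, (n : ℝ) ^ (1 - d) := by
  have hden := den_ge_one q hq d
  have hnum_nonneg : 0 ≤ ∑ r ∈ Finset.Icc 1 q, (r : ℝ) ^ (1 - d) :=
    Finset.sum_nonneg fun r _ => Real.rpow_nonneg (Nat.cast_nonneg r) _
  have hnum_le : ∑ r ∈ Finset.Icc 1 q, (r : ℝ) ^ (1 - d) ≤ ∑' n : ℕ, (n : ℝ) ^ (1 - d) :=
    sum_le_hasSum _ (fun r _ => Real.rpow_nonneg (Nat.cast_nonneg r) _)
      (summable_aux d hd).hasSum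
  calc M1 q d ≤ ∑ r ∈ Finset.Icc 1 q, (r : ℝ) ^ (1 - d) :=
        div_le_self hnum_nonneg hden
    _ ≤ _ := hnum_le

/-- Sarnoff case: `W(n;i,d) = Θ(n)` for `d > 2` and any `i ≥ 0`. -/
theorem W_sarnoff (d i : ℝ) (hd : 2 < d) (hi : 0 ≤ i) :
    ∃ c C : ℝ, 0 < c ∧ c ≤ C ∧
      ∀ n : ℕ, 2 ≤ n →
        c * (n : ℝ) ≤ W n i d ∧ W n i d ≤ C * (n : ℝ) := by
  set C0 : ℝ := ∑' n : ℕ, (n : ℝ) ^ (1 - d) with hC0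
  have hC0_ge : (1 : ℝ) ≤ C0 := by
    have h := le_hasSum (summable_aux d hd).hasSum 1
      (fun j _ => Real.rpow_nonneg (Nat.cast_nonneg j) _)
    simpa using h
  refine ⟨1, C0, one_pos, hC0_ge, ?_⟩
  intro n hn
  have hm : 1 ≤ n - 1 := by omega
  have hS_ge : 1 ≤ H (n - 1) i := by
    have := den_ge_one (n - 1) hm i
    simpa [H] using this
  have hS_pos : 0 < H (n - 1) i := by linarith
  have hsum_one : ∑ q ∈ Finset.Icc 1 (n - 1), (q : ℝ) ^ (-i) / H (n - 1) i = 1 := by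
    rw [← Finset.sum_div]
    rw [show (∑ q ∈ Finset.Icc 1 (n - 1), (q : ℝ) ^ (-i)) = H (n - 1) i from rfl]
    exact div_self (ne_of_gt hS_pos)
  have hp_nonneg : ∀ q ∈ Finset.Icc 1 (n - 1), 0 ≤ (q : ℝ) ^ (-i) / H (n - 1) i :=
    fun q _ => div_nonneg (Real.rpow_nonneg (Nat.cast_nonneg q) _) hS_pos.le
  have hn_pos : (0 : ℝ) < n := by positivity
  constructor
  · have hlow : (1 : ℝ) ≤ ∑ q ∈ Finset.Icc 1 (n - 1),
        ((q : ℝ) ^ (-i) / H (n - 1) i) * M1 q d := by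
      calc (1 : ℝ) = ∑ q ∈ Finset.Icc 1 (n - 1), (q : ℝ) ^ (-i) / H (n - 1) i :=
            hsum_one.symm
        _ ≤ _ := by
            apply Finset.sum_le_sum
            intro q hq
            have hq1 : 1 ≤ q := (Finset.mem_Icc.mp hq).1
            have := M1_ge_one q hq1 d
            nlinarith [hp_nonneg q hq]
    rw [W]
    nlinarith
  · have hhigh : ∑ q ∈ Finset.Icc 1 (n - 1),
        ((q : ℝ) ^ (-i) / H (n - 1) i) * M1 q d ≤ C0 := by
      calc ∑ q ∈ Finset.Icc 1 (n - 1), ((q : ℝ) ^ (-i) / H (n - 1) i) * M1 q d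
          ≤ ∑ q ∈ Finset.Icc 1 (n - 1), ((q : ℝ) ^ (-i) / H (n - 1) i) * C0 := by
            apply Finset.sum_le_sum
            intro q hq
            have hq1 : 1 ≤ q := (Finset.mem_Icc.mp hq).1
            exact mul_le_mul_of_nonneg_left (M1_le_s17 q hq1 d hd) (hp_nonneg q hq)
        _ = C0 := by rw [← Finset.sum_mul, hsum_one, one_mul]
    rw [W]
    nlinarith
end

section
/- Let 0 ≤ i ≤ 1 be a real number. There exist constants 0 < c ≤ C such that for every integer n ≥ 3, c · n · log n ≤ W(n;i,2) ≤ C · n · log n, where W(n;i,2) := n · ∑_{q=1}^{n−1} (q^{−i} / H_{n−1}(i)) · M₁(q,2). (This is the Odlyzko case of the paper's traffic-load theorem: W(i,d) = Θ(n log n) for d = 2 and 0 ≤ i ≤ 1, reproducing Odlyzko's Law V ∝ n log n.) -/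
/-! Write `m = n - 1`. Then `W(n;i,2) = n · E[M₁(Q,2)]` for `Q ~ Zipf(i)` on `{1,…,m}`, and
`M₁(q,2) = H_q(1) / H_q(2)` with `1 ≤ H_q(2) ≤ 2`, so `W` is within a factor `2` of
`n · E[H_Q(1)]`. Since `H_Q(1) ≤ H_m(1) ≤ 1 + log n`, the upper bound is immediate.
For the lower bound write `q^{-i} = q^{-1} · q^{1-i}`: as `q^{1-i}` is nondecreasing for `i ≤ 1`,
the weighted Chebyshev sum inequality shows that `E[H_Q(1)]` is at least its value for
`Zipf(1)`, namely `(∑_{q ≤ m} H_q(1) / q) / H_m(1) ≥ H_m(1) / 2 ≥ (log n) / 2`. -/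

open Finset Real

lemma harmonic_mono : Monotone harmonic :=
  monotone_nat_of_le_succ fun n => by
    rw [harmonic_succ]
    exact le_add_of_nonneg_right (by positivity)

lemma harmonic_nonneg (n : ℕ) : 0 ≤ harmonic n :=
  harmonic_zero ▸ harmonic_mono n.zero_le

lemma sq_harmonic_le_two_mul_sum_harmonic_div (m : ℕ) :
    harmonic m ^ 2 ≤ 2 * ∑ q ∈ Icc 1 m, harmonic q / q := by
  induction m with
  | zero => simp
  | succ m ih =>
    rw [sum_Icc_succ_top (by omega), harmonic_succ, div_eq_mul_inv _ ((m + 1 : ℕ) : ℚ)]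
    nlinarith [sq_nonneg ((m + 1 : ℕ) : ℚ)⁻¹]

theorem MonovaryOn.weighted_sum_mul_sum_le_sum_mul_sum {ι : Type*} {s : Finset ι}
    {w f g : ι → ℝ} (hw : ∀ i ∈ s, 0 ≤ w i) (hfg : MonovaryOn f g s) :
    (∑ i ∈ s, w i * f i) * ∑ i ∈ s, w i * g i ≤ (∑ i ∈ s, w i) * ∑ i ∈ s, w i * (f i * g i) := by
  have hpairs : 0 ≤ ∑ i ∈ s, ∑ j ∈ s, w i * w j * ((f j - f i) * (g j - g i)) :=
    sum_nonneg fun i hi => sum_nonneg fun j hj =>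
      mul_nonneg (mul_nonneg (hw i hi) (hw j hj)) (hfg.sub_mul_sub_nonneg hi hj)
  have hexpand : ∑ i ∈ s, ∑ j ∈ s, w i * w j * ((f j - f i) * (g j - g i)) =
      2 * ((∑ i ∈ s, w i) * ∑ i ∈ s, w i * (f i * g i)
        - (∑ i ∈ s, w i * f i) * ∑ i ∈ s, w i * g i) := by
    rw [show ∑ i ∈ s, ∑ j ∈ s, w i * w j * ((f j - f i) * (g j - g i)) =
        ∑ i ∈ s, ∑ j ∈ s, (w i * (w j * (f j * g j)) + w j * (w i * (f i * g i))
          - w i * f i * (w j * g j) - w j * f j * (w i * g i)) from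
      sum_congr rfl fun i _ => sum_congr rfl fun j _ => by ring]
    simp only [sum_add_distrib, sum_sub_distrib, ← mul_sum, ← sum_mul]
    ring
  linarith

lemma H_one_eq_harmonic (m : ℕ) : H m 1 = harmonic m := by
  rw [H, harmonic_eq_sum_Icc]
  push_cast
  exact sum_congr rfl fun j _ => rpow_neg_one _

lemma H_two_eq_sum_inv_sq (q : ℕ) : H q 2 = ∑ j ∈ Icc 1 q, ((j : ℝ) ^ 2)⁻¹ :=
  sum_congr rfl fun j _ => by rw [rpow_neg (Nat.cast_nonneg _), rpow_two]

lemma one_le_H_two {q : ℕ} (hq : 1 ≤ q) : 1 ≤ H q 2 := by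
  rw [H_two_eq_sum_inv_sq]
  calc (1 : ℝ) = (((1 : ℕ) : ℝ) ^ 2)⁻¹ := by norm_num
    _ ≤ _ := single_le_sum (f := fun j : ℕ => ((j : ℝ) ^ 2)⁻¹) (fun j _ => by positivity)
      (mem_Icc.mpr ⟨le_rfl, hq⟩)

lemma H_two_le_two (q : ℕ) : H q 2 ≤ 2 := by
  have hIcc : Icc 1 q = Ioo 0 (q + 1) := by ext; simp; omega
  simpa [H_two_eq_sum_inv_sq, hIcc] using sum_Ioo_inv_sq_le (α := ℝ) 0 (q + 1)

lemma M1_two_eq (q : ℕ) : M1 q 2 = harmonic q / H q 2 := by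
  rw [M1, ← H_one_eq_harmonic]
  norm_num [H]

lemma harmonic_div_two_le_M1_two {q : ℕ} (hq : 1 ≤ q) : (harmonic q : ℝ) / 2 ≤ M1 q 2 := by
  rw [M1_two_eq]
  exact div_le_div_of_nonneg_left (mod_cast harmonic_nonneg q)
    (zero_lt_one.trans_le (one_le_H_two hq)) (H_two_le_two q)

lemma M1_two_le_harmonic {q : ℕ} (hq : 1 ≤ q) : M1 q 2 ≤ harmonic q := by
  rw [M1_two_eq]
  exact div_le_self (mod_cast harmonic_nonneg q) (one_le_H_two hq)

lemma harmonic_mul_H_le_two_mul_sum {i : ℝ} (hi : i ≤ 1) (m : ℕ) :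
    harmonic m * H m i ≤ 2 * ∑ q ∈ Icc 1 m, (q : ℝ) ^ (-i) * harmonic q := by
  have hmono : MonovaryOn (fun q : ℕ => (harmonic q : ℝ)) (fun q : ℕ => (q : ℝ) ^ (1 - i))
      (Icc 1 m : Set ℕ) :=
    MonotoneOn.monovaryOn (fun p _ q _ hpq => by exact_mod_cast harmonic_mono hpq)
      (fun p _ q _ hpq => rpow_le_rpow (Nat.cast_nonneg p) (Nat.cast_le.mpr hpq) (by linarith))
  have hcheb := hmono.weighted_sum_mul_sum_le_sum_mul_sum (w := fun q : ℕ => (q : ℝ)⁻¹)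
    fun q _ => by positivity
  have hweight : ∀ q ∈ Icc 1 m, (q : ℝ)⁻¹ * (q : ℝ) ^ (1 - i) = (q : ℝ) ^ (-i) := fun q hq => by
    rw [← rpow_neg_one, ← rpow_add (Nat.cast_pos.mpr (mem_Icc.mp hq).1)]
    ring_nf
  have hsq : (harmonic m : ℝ) ^ 2 ≤ 2 * ∑ q ∈ Icc 1 m, (q : ℝ)⁻¹ * harmonic q := by
    have := sq_harmonic_le_two_mul_sum_harmonic_div m
    rw [← Rat.cast_le (K := ℝ)] at this
    push_cast at this
    simpa only [div_eq_inv_mul] using this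
  have hw : ∑ q ∈ Icc 1 m, (q : ℝ)⁻¹ = harmonic m := by
    simp [harmonic_eq_sum_Icc]
  have hwfg : ∑ q ∈ Icc 1 m, (q : ℝ)⁻¹ * (harmonic q * (q : ℝ) ^ (1 - i)) =
      ∑ q ∈ Icc 1 m, (q : ℝ) ^ (-i) * harmonic q :=
    sum_congr rfl fun q hq => by rw [← hweight q hq]; ring
  rw [sum_congr rfl hweight, hw, hwfg, ← H] at hcheb
  have hS : 0 ≤ ∑ q ∈ Icc 1 m, (q : ℝ) ^ (-i) * harmonic q :=
    sum_nonneg fun q _ => mul_nonneg (by positivity) (mod_cast harmonic_nonneg q)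
  rcases (harmonic_nonneg m).eq_or_lt with hzero | hpos
  · simp [← hzero, hS]
  · have hpos' : (0 : ℝ) < harmonic m := mod_cast hpos
    refine le_of_mul_le_mul_left ?_ hpos'
    have hH : 0 ≤ H m i := sum_nonneg fun j _ => by positivity
    nlinarith [mul_le_mul_of_nonneg_right hsq hH]

lemma W_eq_mul_sum_div_H (n : ℕ) (i d : ℝ) :
    W n i d = n * (∑ q ∈ Icc 1 (n - 1), (q : ℝ) ^ (-i) * M1 q d) / H (n - 1) i := by
  rw [W, mul_div_assoc, sum_div]
  exact congrArg _ (sum_congr rfl fun q _ => div_mul_eq_mul_div _ _ _)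

lemma W_two_le (n : ℕ) (i : ℝ) : W n i 2 ≤ n * harmonic (n - 1) := by
  rw [W_eq_mul_sum_div_H, mul_div_assoc]
  gcongr
  refine div_le_of_le_mul₀ (sum_nonneg fun j _ => by positivity) (mod_cast harmonic_nonneg _) ?_
  rw [H, mul_sum]
  refine sum_le_sum fun q hq => ?_
  rw [mul_comm]
  gcongr
  exact (M1_two_le_harmonic (mem_Icc.mp hq).1).trans (mod_cast harmonic_mono (mem_Icc.mp hq).2)

lemma W_two_ge {i : ℝ} (hi : i ≤ 1) {n : ℕ} (hn : 2 ≤ n) : n * harmonic (n - 1) / 4 ≤ W n i 2 := by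
  have hH := H_pos (show 1 ≤ n - 1 by omega) i
  rw [W_eq_mul_sum_div_H, mul_div_assoc, mul_div_assoc]
  gcongr (n : ℝ) * ?_
  rw [le_div_iff₀ hH]
  calc (harmonic (n - 1) : ℝ) / 4 * H (n - 1) i
      ≤ (∑ q ∈ Icc 1 (n - 1), (q : ℝ) ^ (-i) * harmonic q) / 2 := by
        linarith [harmonic_mul_H_le_two_mul_sum hi (n - 1)]
    _ = ∑ q ∈ Icc 1 (n - 1), (q : ℝ) ^ (-i) * (harmonic q / 2) := by
        rw [sum_div]; exact sum_congr rfl fun q _ => by ring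
    _ ≤ ∑ q ∈ Icc 1 (n - 1), (q : ℝ) ^ (-i) * M1 q 2 :=
        sum_le_sum fun q hq => by
          gcongr
          exact harmonic_div_two_le_M1_two (mem_Icc.mp hq).1

theorem W_odlyzko_general (i : ℝ) (hi1 : i ≤ 1) :
    ∃ c C : ℝ, 0 < c ∧ c ≤ C ∧
      ∀ n : ℕ, 3 ≤ n →
        c * (n : ℝ) * Real.log n ≤ W n i 2 ∧ W n i 2 ≤ C * (n : ℝ) * Real.log n := by
  refine ⟨1 / 4, 2, by norm_num, by norm_num, fun n hn => ⟨?_, ?_⟩⟩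
  · have hlog : Real.log n ≤ harmonic (n - 1) := by
      simpa [Nat.sub_add_cancel (by omega : 1 ≤ n)] using log_add_one_le_harmonic (n - 1)
    calc 1 / 4 * (n : ℝ) * Real.log n ≤ n * harmonic (n - 1) / 4 := by
          rw [one_div_mul_eq_div, div_mul_eq_mul_div]
          gcongr
      _ ≤ W n i 2 := W_two_ge hi1 (by omega)
  · have hone : 1 ≤ Real.log n := by
      have h3 : (3 : ℝ) ≤ n := by exact_mod_cast hn
      rw [le_log_iff_exp_le (by positivity)]
      linarith [exp_one_lt_three]
    have hharm : (harmonic (n - 1) : ℝ) ≤ 1 + Real.log n :=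
      (harmonic_le_one_add_log _).trans <| add_le_add_right
        (log_le_log (Nat.cast_pos.mpr (by omega)) (Nat.cast_le.mpr (n.sub_le 1))) 1
    calc W n i 2 ≤ n * harmonic (n - 1) := W_two_le n i
      _ ≤ n * (2 * Real.log n) := by gcongr; linarith
      _ = 2 * n * Real.log n := by ring

/-- Odlyzko case: `W(n;i,2) = Θ(n log n)` for `0 ≤ i ≤ 1`. -/
theorem W_odlyzko (i : ℝ) (hi0 : 0 ≤ i) (hi1 : i ≤ 1) :
    ∃ c C : ℝ, 0 < c ∧ c ≤ C ∧
      ∀ n : ℕ, 3 ≤ n →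
        c * (n : ℝ) * Real.log n ≤ W n i 2 ∧ W n i 2 ≤ C * (n : ℝ) * Real.log n :=
  W_odlyzko_general i hi1
end

section
/- Let 0 ≤ d < 1 and 0 ≤ i < 1 be real numbers. There exist constants 0 < c ≤ C such that for every integer n ≥ 2, c · √n ≤ G(n;i,d) ≤ C · √n, where G(n;i,d) := ∑_{q=1}^{n−1} (q^{−i} / H_{n−1}(i)) · M_{1/2}(q,d). (This is the case 0 ≤ d < 1, 0 ≤ i < 1 of the paper's quantity G(i,d), the expected value of √r_k over the joint node-influence/data-destination distribution, which satisfies G = Θ(n^{1/2}) in this regime and drives the Θ(n²) traffic load of the Metcalfe case.) -/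
/-- Mean of `√r` under the truncated Zipf distribution with exponent `d` on `{1,…,q}`. -/
noncomputable def Mhalf (q : ℕ) (d : ℝ) : ℝ :=
  (∑ r ∈ Finset.Icc 1 q, (r : ℝ) ^ (1 / 2 - d)) / (∑ r ∈ Finset.Icc 1 q, (r : ℝ) ^ (-d))

/-- Expectation of `√r` over the joint node-influence/data-destination distribution. -/
noncomputable def G (n : ℕ) (i d : ℝ) : ℝ :=
  ∑ q ∈ Finset.Icc 1 (n - 1), ((q : ℝ) ^ (-i) / H (n - 1) i) * Mhalf q d

open Real Finset

lemma mul_rpow_sub_one_le_add_one_rpow_sub_rpow {x p : ℝ} (hx : 0 ≤ x) (hp0 : 0 ≤ p)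
    (hp1 : p ≤ 1) : p * (x + 1) ^ (p - 1) ≤ (x + 1) ^ p - x ^ p := by
  have hy : 0 < x + 1 := by linarith
  have hs : -1 ≤ -(x + 1)⁻¹ := neg_le_neg (inv_le_one_of_one_le₀ (by linarith))
  have hx_eq : (x + 1) * (1 + -(x + 1)⁻¹) = x := by field_simp; ring
  calc p * (x + 1) ^ (p - 1) = (x + 1) ^ p - (x + 1) ^ p * (1 + p * -(x + 1)⁻¹) := by
        rw [rpow_sub_one hy.ne']; ring
    _ ≤ (x + 1) ^ p - (x + 1) ^ p * (1 + -(x + 1)⁻¹) ^ p := by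
        gcongr; exact rpow_one_add_le_one_add_mul_self hs hp0 hp1
    _ = (x + 1) ^ p - x ^ p := by rw [← mul_rpow hy.le (by linarith), hx_eq]

lemma sum_Icc_rpow_neg_le {d : ℝ} (hd0 : 0 ≤ d) (hd1 : d < 1) (q : ℕ) :
    ∑ r ∈ Icc 1 q, (r : ℝ) ^ (-d) ≤ (q : ℝ) ^ (1 - d) / (1 - d) := by
  rw [le_div_iff₀ (by linarith), mul_comm]
  induction q with
  | zero => simpa using rpow_nonneg le_rfl _
  | succ q ih =>
    have hstep := mul_rpow_sub_one_le_add_one_rpow_sub_rpow (q.cast_nonneg' (α := ℝ))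
      (by linarith : 0 ≤ 1 - d) (by linarith)
    rw [sub_sub_cancel_left] at hstep
    rw [sum_Icc_succ_top (by omega), mul_add]
    push_cast
    linarith

lemma sq_div_two_le_sum_Icc (q : ℕ) : (q : ℝ) ^ 2 / 2 ≤ ∑ r ∈ Icc 1 q, (r : ℝ) := by
  induction q with
  | zero => simp
  | succ q ih =>
    rw [sum_Icc_succ_top (by omega)]
    push_cast
    nlinarith

lemma rpow_add_one_div_two_le_sum_Icc {s : ℝ} (hs : s ≤ 1) {q : ℕ} (hq : 1 ≤ q) :
    (q : ℝ) ^ (s + 1) / 2 ≤ ∑ r ∈ Icc 1 q, (r : ℝ) ^ s := by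
  have hq0 : (0 : ℝ) < q := by exact_mod_cast hq
  have hterm : ∀ r ∈ Icc 1 q, (r : ℝ) * (q : ℝ) ^ (s - 1) ≤ (r : ℝ) ^ s := by
    intro r hr
    rw [mem_Icc] at hr
    have hr0 : (0 : ℝ) < r := by exact_mod_cast hr.1
    calc (r : ℝ) * (q : ℝ) ^ (s - 1) ≤ r * (r : ℝ) ^ (s - 1) :=
          mul_le_mul_of_nonneg_left
            (rpow_le_rpow_of_nonpos hr0 (Nat.cast_le.2 hr.2) (by linarith)) hr0.le
      _ = (r : ℝ) ^ s := by rw [rpow_sub_one hr0.ne']; field_simp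
  calc (q : ℝ) ^ (s + 1) / 2 = (q : ℝ) ^ 2 / 2 * (q : ℝ) ^ (s - 1) := by
        rw [show s + 1 = 2 + (s - 1) by ring, rpow_add hq0, rpow_two]; ring
    _ ≤ (∑ r ∈ Icc 1 q, (r : ℝ)) * (q : ℝ) ^ (s - 1) := by
        gcongr; exact sq_div_two_le_sum_Icc q
    _ ≤ ∑ r ∈ Icc 1 q, (r : ℝ) ^ s := by rw [sum_mul]; exact sum_le_sum hterm

lemma rpow_neg_mul_sqrt {r : ℝ} (hr : 0 < r) (e : ℝ) : r ^ (-e) * √r = r ^ (1 / 2 - e) := by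
  rw [sqrt_eq_rpow, ← rpow_add hr]; ring_nf

lemma sum_Icc_rpow_pos (s : ℝ) {q : ℕ} (hq : 0 < q) : 0 < ∑ r ∈ Icc 1 q, (r : ℝ) ^ s :=
  sum_pos (fun r hr => rpow_pos_of_pos (by exact_mod_cast (mem_Icc.1 hr).1) _) (nonempty_Icc.2 hq)

lemma Mhalf_le_sqrt (q : ℕ) (d : ℝ) : Mhalf q d ≤ √q := by
  rcases Nat.eq_zero_or_pos q with rfl | hq
  · simp [Mhalf]
  rw [Mhalf, div_le_iff₀ (sum_Icc_rpow_pos (-d) hq), mul_sum]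
  refine sum_le_sum fun r hr => ?_
  rw [mem_Icc] at hr
  have hr0 : (0 : ℝ) < r := by exact_mod_cast hr.1
  rw [← rpow_neg_mul_sqrt hr0, mul_comm]
  gcongr
  exact_mod_cast hr.2

lemma mul_sqrt_le_Mhalf {d : ℝ} (hd0 : 0 ≤ d) (hd1 : d < 1) (q : ℕ) :
    (1 - d) / 2 * √q ≤ Mhalf q d := by
  rcases Nat.eq_zero_or_pos q with rfl | hq
  · simp [Mhalf]
  have hq0 : (0 : ℝ) < q := by exact_mod_cast hq
  have hd : 0 < 1 - d := by linarith
  have hnum := rpow_add_one_div_two_le_sum_Icc (by linarith : 1 / 2 - d ≤ 1) hq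
  calc (1 - d) / 2 * √q = ((q : ℝ) ^ (1 / 2 - d + 1) / 2) / ((q : ℝ) ^ (1 - d) / (1 - d)) := by
        rw [show 1 / 2 - d + 1 = 1 / 2 + (1 - d) by ring, rpow_add hq0, ← sqrt_eq_rpow]
        field_simp
    _ ≤ Mhalf q d :=
        div_le_div₀ (sum_nonneg fun r _ => rpow_nonneg r.cast_nonneg _) hnum
          (sum_Icc_rpow_pos (-d) hq) (sum_Icc_rpow_neg_le hd0 hd1 q)

lemma sum_weight_mul_sqrt_eq_Mhalf (m : ℕ) (i : ℝ) :
    ∑ q ∈ Icc 1 m, (q : ℝ) ^ (-i) / H m i * √q = Mhalf m i := by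
  rw [Mhalf, ← H, sum_div]
  refine sum_congr rfl fun q hq => ?_
  rw [div_mul_eq_mul_div, rpow_neg_mul_sqrt (by exact_mod_cast (mem_Icc.1 hq).1)]

lemma weight_nonneg (q m : ℕ) (i : ℝ) : 0 ≤ (q : ℝ) ^ (-i) / H m i :=
  div_nonneg (rpow_nonneg q.cast_nonneg _) (sum_nonneg fun j _ => rpow_nonneg j.cast_nonneg _)

lemma G_le_Mhalf (n : ℕ) (i d : ℝ) : G n i d ≤ Mhalf (n - 1) i := by
  rw [G, ← sum_weight_mul_sqrt_eq_Mhalf]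
  exact sum_le_sum fun q _ =>
    mul_le_mul_of_nonneg_left (Mhalf_le_sqrt q d) (weight_nonneg q _ i)

lemma mul_Mhalf_le_G {d : ℝ} (hd0 : 0 ≤ d) (hd1 : d < 1) (n : ℕ) (i : ℝ) :
    (1 - d) / 2 * Mhalf (n - 1) i ≤ G n i d := by
  rw [G, ← sum_weight_mul_sqrt_eq_Mhalf, mul_sum]
  refine sum_le_sum fun q _ => ?_
  rw [mul_left_comm]
  exact mul_le_mul_of_nonneg_left (mul_sqrt_le_Mhalf hd0 hd1 q) (weight_nonneg q _ i)

lemma sqrt_le_two_mul_sqrt_sub_one {n : ℕ} (hn : 2 ≤ n) : √n ≤ 2 * √(n - 1 : ℕ) := by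
  rw [sqrt_le_left (by positivity), mul_pow, sq_sqrt (by positivity)]
  exact_mod_cast (by omega : n ≤ 2 ^ 2 * (n - 1))

/-- Metcalfe case of `G`: `G(n;i,d) = Θ(√n)` for `0 ≤ d < 1`, `0 ≤ i < 1`. -/
theorem G_metcalfe (d i : ℝ) (hd0 : 0 ≤ d) (hd1 : d < 1) (hi0 : 0 ≤ i) (hi1 : i < 1) :
    ∃ c C : ℝ, 0 < c ∧ c ≤ C ∧
      ∀ n : ℕ, 2 ≤ n →
        c * Real.sqrt n ≤ G n i d ∧ G n i d ≤ C * Real.sqrt n := by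
  have hd : 0 < 1 - d := by linarith
  have hi : 0 < 1 - i := by linarith
  refine ⟨(1 - d) * (1 - i) / 8, 1, by positivity, by nlinarith, fun n hn => ⟨?_, ?_⟩⟩
  · calc (1 - d) * (1 - i) / 8 * √n ≤ (1 - d) * (1 - i) / 8 * (2 * √(n - 1 : ℕ)) := by
          gcongr; exact sqrt_le_two_mul_sqrt_sub_one hn
      _ = (1 - d) / 2 * ((1 - i) / 2 * √(n - 1 : ℕ)) := by ring
      _ ≤ (1 - d) / 2 * Mhalf (n - 1) i := by gcongr; exact mul_sqrt_le_Mhalf hi0 hi1 _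
      _ ≤ G n i d := mul_Mhalf_le_G hd0 hd1 n i
  · calc G n i d ≤ Mhalf (n - 1) i := G_le_Mhalf n i d
      _ ≤ √(n - 1 : ℕ) := Mhalf_le_sqrt _ i
      _ ≤ 1 * √n := by rw [one_mul]; gcongr; omega
end
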